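/- arXiv:2305.11590 — 2 statements merged into one kernel-verified Lean document; each statement's English description precedes it below -/
import Mathlib

section
/- The potential function Φ̃(x,y) = H̃(x, ȳ) + H̃(y, s̄_h) − H̃(s_h, ȳ), where s_h is a hidden state, is symmetric: Φ̃(x,y) = Φ̃(y,x) for all states x, y. -/
open Finset

/-- State space of the non-atomic walk: original vertices plus directed intermediate states. -/
def NAState (V : Type*) (G : SimpleGraph V) : Type _ :=
  V ⊕ {p : V × V // G.Adj p.1 p.2}

namespace NAState

variable {V : Type*} {G : SimpleGraph V}

/-- Original-vertex state. -/
def orig (v : V) : NAState V G := Sum.inl v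

/-- Intermediate state `s_{ab}`, directed from `a` to `b`. -/
def intm (a b : V) (h : G.Adj a b) : NAState V G := Sum.inr ⟨(a, b), h⟩

/-- Direction reversal: fixes original vertices, reverses intermediate states. -/
def bar : NAState V G → NAState V G
  | Sum.inl v => Sum.inl v
  | Sum.inr ⟨(a, b), h⟩ => Sum.inr ⟨(b, a), h.symm⟩

variable [Fintype V] [DecidableRel G.Adj]

/-- The number `d_s` of adjacent states of a state. -/
def asDeg : NAState V G → ℝ
  | Sum.inl v => (G.degree v : ℝ)
  | Sum.inr _ => 1

/-- Sum of `f` over the adjacent states `N_as(s)` of a state. -/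
def asSum (f : NAState V G → ℝ) : NAState V G → ℝ
  | Sum.inl v => ∑ w ∈ (G.neighborFinset v).attach,
      f (Sum.inr ⟨(v, w.1), (G.mem_neighborFinset _ _).mp w.2⟩)
  | Sum.inr ⟨(_, b), _⟩ => f (Sum.inl b)

end NAState

section AuxStmt8

set_option linter.unusedSectionVars false
set_option linter.unusedVariables false

variable {V : Type*} [Fintype V] [DecidableEq V] {G : SimpleGraph V} [DecidableRel G.Adj]

instance : Fintype (NAState V G) := by unfold NAState; infer_instance

instance : DecidableEq (NAState V G) := by unfold NAState; exact instDecidableEqSum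

namespace NAState

lemma bar_bar (s : NAState V G) : s.bar.bar = s := by
  rcases s with v | ⟨⟨a, b⟩, h⟩ <;> rfl

lemma bar_inl (v : V) : bar (Sum.inl v : NAState V G) = Sum.inl v := rfl

lemma bar_inr (e : {p : V × V // G.Adj p.1 p.2}) :
    bar (Sum.inr e) = Sum.inr ⟨(e.1.2, e.1.1), e.2.symm⟩ := by
  rcases e with ⟨⟨a, b⟩, h⟩; rfl

lemma asDeg_bar (s : NAState V G) : asDeg s.bar = asDeg s := by
  rcases s with v | ⟨⟨a, b⟩, h⟩ <;> rfl

lemma asDeg_pos (hdeg : ∀ v : V, 0 < G.degree v) (s : NAState V G) : 0 < asDeg s := by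
  rcases s with v | ⟨⟨a, b⟩, h⟩
  · show (0:ℝ) < (G.degree v : ℝ)
    exact_mod_cast hdeg v
  · exact one_pos

/-- The bar involution as an equiv. -/
def barEquiv : NAState V G ≃ NAState V G :=
  Function.Involutive.toPerm bar bar_bar

lemma sum_bar (f : NAState V G → ℝ) : ∑ s : NAState V G, f s.bar = ∑ s : NAState V G, f s :=
  Equiv.sum_comp (barEquiv (V := V) (G := G)) f

end NAState

open NAState

lemma sum_nastate (f : NAState V G → ℝ) :
    ∑ s : NAState V G, f s
      = (∑ v : V, f (Sum.inl v)) + ∑ e : {p : V × V // G.Adj p.1 p.2}, f (Sum.inr e) :=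
  Fintype.sum_sum_type f

def edgeEquiv (G : SimpleGraph V) [DecidableRel G.Adj] :
    {p : V × V // G.Adj p.1 p.2} ≃ Σ v : V, {w // w ∈ G.neighborFinset v} where
  toFun e := ⟨e.1.1, ⟨e.1.2, (G.mem_neighborFinset _ _).mpr e.2⟩⟩
  invFun x := ⟨(x.1, x.2.1), (G.mem_neighborFinset _ _).mp x.2.2⟩
  left_inv e := rfl
  right_inv x := rfl

lemma sum_E (f : {p : V × V // G.Adj p.1 p.2} → ℝ) :
    ∑ e, f e = ∑ v : V, ∑ w ∈ (G.neighborFinset v).attach,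
      f ⟨(v, w.1), (G.mem_neighborFinset _ _).mp w.2⟩ := by
  rw [← Equiv.sum_comp (edgeEquiv G).symm f]
  rw [show (Finset.univ : Finset ((v : V) × {w // w ∈ G.neighborFinset v}))
      = Finset.univ.sigma (fun _ => Finset.univ) from rfl, Finset.sum_sigma]
  simp [Finset.univ_eq_attach, edgeEquiv]

def swapE (G : SimpleGraph V) [DecidableRel G.Adj] :
    {p : V × V // G.Adj p.1 p.2} ≃ {p : V × V // G.Adj p.1 p.2} where
  toFun e := ⟨(e.1.2, e.1.1), e.2.symm⟩
  invFun e := ⟨(e.1.2, e.1.1), e.2.symm⟩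
  left_inv e := rfl
  right_inv e := rfl

lemma sum_E_swap (f : {p : V × V // G.Adj p.1 p.2} → ℝ) :
    ∑ e, f e = ∑ e, f (swapE G e) := (Equiv.sum_comp (swapE G) f).symm

lemma asSum_inl (g : NAState V G → ℝ) (v : V) :
    NAState.asSum g (Sum.inl v) = ∑ w ∈ (G.neighborFinset v).attach,
      g (Sum.inr ⟨(v, w.1), (G.mem_neighborFinset _ _).mp w.2⟩) := rfl

lemma asSum_inr (g : NAState V G → ℝ) (e : {p : V × V // G.Adj p.1 p.2}) :
    NAState.asSum g (Sum.inr e) = g (Sum.inl e.1.2) := by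
  rcases e with ⟨⟨a, b⟩, h⟩; rfl

/-- The fundamental bilinear symmetry: `∑ f · asSum g = ∑ (g∘bar) · asSum (f∘bar)`. -/
lemma J_symm (f g : NAState V G → ℝ) :
    ∑ s : NAState V G, f s * asSum g s
      = ∑ s : NAState V G, g s.bar * asSum (fun z => f z.bar) s := by
  rw [sum_nastate (fun s => f s * asSum g s),
      sum_nastate (fun s => g s.bar * asSum (fun z => f z.bar) s)]
  have l1 : ∀ v : V, f (Sum.inl v) * asSum g (Sum.inl v)
      = ∑ w ∈ (G.neighborFinset v).attach,
          f (Sum.inl v) * g (Sum.inr ⟨(v, w.1), (G.mem_neighborFinset _ _).mp w.2⟩) :=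
    fun v => by rw [asSum_inl, Finset.mul_sum]
  have r1 : ∀ v : V, g (Sum.inl v) * asSum (fun z => f z.bar) (Sum.inl v : NAState V G)
      = ∑ w ∈ (G.neighborFinset v).attach,
          g (Sum.inl v) * f (Sum.inr ⟨(w.1, v), ((G.mem_neighborFinset _ _).mp w.2).symm⟩) := by
    intro v
    rw [asSum_inl, Finset.mul_sum]
    exact Finset.sum_congr rfl fun w _ => by rw [bar_inr]
  simp only [bar_inl, bar_inr, l1, r1, asSum_inr]
  rw [← sum_E (fun e => f (Sum.inl e.1.1) * g (Sum.inr e)),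
      ← sum_E (fun e => g (Sum.inl e.1.1) * f (Sum.inr ⟨(e.1.2, e.1.1), e.2.symm⟩))]
  rw [sum_E_swap (fun e => g (Sum.inl e.1.1) * f (Sum.inr ⟨(e.1.2, e.1.1), e.2.symm⟩)),
      sum_E_swap (fun e => g (Sum.inr ⟨(e.1.2, e.1.1), e.2.symm⟩) * f (Sum.inl e.1.2))]
  simp only [swapE, Equiv.coe_fn_mk]
  rw [add_comm]
  congr 1 <;> exact Finset.sum_congr rfl fun e _ => mul_comm _ _

/-- asSum of the constant function 1 is asDeg. -/
lemma asSum_one (s : NAState V G) : asSum (fun _ => (1 : ℝ)) s = asDeg s := by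
  rcases s with v | ⟨⟨a, b⟩, h⟩
  · simp [asSum, asDeg]
  · simp [asSum, asDeg]

/-- Stationarity of asDeg. -/
lemma sum_asSum (g : NAState V G → ℝ) :
    ∑ s : NAState V G, asSum g s = ∑ s : NAState V G, asDeg s * g s := by
  have h := J_symm (fun _ => (1 : ℝ)) g
  simp only [one_mul, asSum_one] at h
  rw [h, ← sum_bar (fun s => asDeg s * g s)]
  exact Finset.sum_congr rfl fun s _ => by rw [asDeg_bar, mul_comm]

lemma step_unified (Ht : NAState V G → NAState V G → ℝ)
    (hHtorig : ∀ (v : V) (s : NAState V G), NAState.orig v ≠ s →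
      Ht (NAState.orig v) s =
        1 + (1 / (G.degree v : ℝ)) * NAState.asSum (fun z => Ht z s) (NAState.orig v))
    (hHtintm : ∀ (a b : V) (h : G.Adj a b) (s : NAState V G), NAState.intm a b h ≠ s →
      Ht (NAState.intm a b h) s = 1 + Ht (NAState.orig b) s) :
    ∀ s t : NAState V G, s ≠ t →
      Ht s t = 1 + (1 / asDeg s) * asSum (fun z => Ht z t) s := by
  intro s t hst
  rcases s with v | ⟨⟨a, b⟩, h⟩
  · exact hHtorig v t hst
  · show Ht (NAState.intm a b h) t = 1 + (1 / (1 : ℝ)) * Ht (NAState.orig b) t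
    rw [hHtintm a b h t hst]
    ring

lemma key_asSum (hdeg : ∀ v : V, 0 < G.degree v)
    (Ht : NAState V G → NAState V G → ℝ)
    (hHt0 : ∀ s, Ht s s = 0)
    (hstep : ∀ s t : NAState V G, s ≠ t →
      Ht s t = 1 + (1 / asDeg s) * asSum (fun z => Ht z t) s)
    (t s : NAState V G) :
    asSum (fun z => Ht z t) s
      = asDeg s * Ht s t - asDeg s + (if s = t then (∑ r : NAState V G, asDeg r) else 0) := by
  have hne : ∀ s : NAState V G, asDeg s ≠ 0 := fun s => (asDeg_pos hdeg s).ne'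
  have h2 : ∀ s : NAState V G, s ≠ t →
      asDeg s * Ht s t = asDeg s + asSum (fun z => Ht z t) s := by
    intro s hst
    rw [hstep s t hst, mul_add, mul_one, ← mul_assoc, mul_one_div_cancel (hne s), one_mul]
  have h3 : asDeg t + asSum (fun z => Ht z t) t = ∑ r : NAState V G, asDeg r := by
    have h4 : ∑ s : NAState V G, asDeg s * Ht s t
        = ∑ s : NAState V G, (asDeg s + asSum (fun z => Ht z t) s
            - (if s = t then asDeg t + asSum (fun z => Ht z t) t else 0)) := by
      refine Finset.sum_congr rfl fun s _ => ?_
      by_cases hst : s = t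
      · subst hst; simp [hHt0]
      · rw [h2 s hst]; simp [hst]
    rw [Finset.sum_sub_distrib, Finset.sum_add_distrib, Finset.sum_ite_eq' Finset.univ t
        (fun _ => asDeg t + asSum (fun z => Ht z t) t), sum_asSum] at h4
    simp only [Finset.mem_univ, if_true] at h4
    linarith
  by_cases hst : s = t
  · subst hst
    rw [if_pos rfl, hHt0 s]
    linarith
  · rw [if_neg hst]
    have := h2 s hst
    linarith

lemma main_identity (hdeg : ∀ v : V, 0 < G.degree v)
    (Ht : NAState V G → NAState V G → ℝ)
    (hHt0 : ∀ s, Ht s s = 0)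
    (hstep : ∀ s t : NAState V G, s ≠ t →
      Ht s t = 1 + (1 / asDeg s) * asSum (fun z => Ht z t) s)
    (t t' : NAState V G) :
    (∑ r : NAState V G, asDeg r) * Ht t.bar t' - (∑ s : NAState V G, asDeg s * Ht s t')
      = (∑ r : NAState V G, asDeg r) * Ht t'.bar t - (∑ s : NAState V G, asDeg s * Ht s t) := by
  set D := ∑ r : NAState V G, asDeg r with hD
  have expand : ∀ (φ : NAState V G → ℝ) (r : NAState V G),
      ∑ s : NAState V G, φ s * asSum (fun z => Ht z r) s
        = (∑ s : NAState V G, asDeg s * (φ s * Ht s r))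
          - (∑ s : NAState V G, asDeg s * φ s) + D * φ r := by
    intro φ r
    have : ∀ s : NAState V G, φ s * asSum (fun z => Ht z r) s
        = asDeg s * (φ s * Ht s r) - asDeg s * φ s + (if s = r then D * φ s else 0) := by
      intro s
      rw [key_asSum hdeg Ht hHt0 hstep r s]
      by_cases hsr : s = r
      · subst hsr; rw [if_pos rfl, if_pos rfl]; ring
      · rw [if_neg hsr, if_neg hsr]; ring
    rw [Finset.sum_congr rfl fun s _ => this s, Finset.sum_add_distrib,
        Finset.sum_sub_distrib, Finset.sum_ite_eq' Finset.univ r (fun s => D * φ s)]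
    simp only [Finset.mem_univ, if_true]
  have hJ := J_symm (fun s => Ht s.bar t') (fun s => Ht s t)
  simp only [bar_bar] at hJ
  rw [expand (fun s => Ht s.bar t') t, expand (fun s => Ht s.bar t) t'] at hJ
  have b1 : ∑ s : NAState V G, asDeg s * (Ht s.bar t' * Ht s t)
      = ∑ s : NAState V G, asDeg s * (Ht s.bar t * Ht s t') := by
    rw [← sum_bar (fun s => asDeg s * (Ht s.bar t * Ht s t'))]
    refine Finset.sum_congr rfl fun s _ => ?_
    rw [asDeg_bar, bar_bar]
    ring
  have b2 : ∑ s : NAState V G, asDeg s * Ht s.bar t' = ∑ s : NAState V G, asDeg s * Ht s t' := by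
    rw [← sum_bar (fun s => asDeg s * Ht s t')]
    exact Finset.sum_congr rfl fun s _ => by rw [asDeg_bar]
  have b3 : ∑ s : NAState V G, asDeg s * Ht s.bar t = ∑ s : NAState V G, asDeg s * Ht s t := by
    rw [← sum_bar (fun s => asDeg s * Ht s t)]
    exact Finset.sum_congr rfl fun s _ => by rw [asDeg_bar]
  rw [b1, b2, b3] at hJ
  linarith

end AuxStmt8

theorem stmt8 {V : Type*} [Fintype V] [DecidableEq V] (G : SimpleGraph V)
    [DecidableRel G.Adj] (hconn : G.Connected)
    (Ht : NAState V G → NAState V G → ℝ)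
    (hHt0 : ∀ s, Ht s s = 0)
    (hHtorig : ∀ (v : V) (s : NAState V G), NAState.orig v ≠ s →
      Ht (NAState.orig v) s =
        1 + (1 / (G.degree v : ℝ)) * NAState.asSum (fun z => Ht z s) (NAState.orig v))
    (hHtintm : ∀ (a b : V) (h : G.Adj a b) (s : NAState V G), NAState.intm a b h ≠ s →
      Ht (NAState.intm a b h) s = 1 + Ht (NAState.orig b) s)
    (sh : NAState V G) (hhidden : ∀ z : NAState V G, Ht sh z.bar ≤ Ht z sh.bar)
    (x y : NAState V G) :
    Ht x y.bar + Ht y sh.bar - Ht sh y.bar = Ht y x.bar + Ht x sh.bar - Ht sh x.bar := by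
  classical
  by_cases hdeg : ∀ v : V, 0 < G.degree v
  · have hstep := step_unified Ht hHtorig hHtintm
    have hmain := main_identity hdeg Ht hHt0 hstep
    have e1 := hmain x.bar y.bar
    have e2 := hmain y.bar sh.bar
    have e3 := hmain sh.bar x.bar
    simp only [NAState.bar_bar] at e1 e2 e3
    have hVne : Nonempty V := hconn.nonempty
    haveI : Nonempty (NAState V G) := ⟨Sum.inl hVne.some⟩
    have hDpos : 0 < ∑ r : NAState V G, NAState.asDeg r :=
      Finset.sum_pos (fun s _ => NAState.asDeg_pos hdeg s) Finset.univ_nonempty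
    have hsum : (∑ r : NAState V G, NAState.asDeg r) *
        ((Ht x y.bar + Ht y sh.bar - Ht sh y.bar)
          - (Ht y x.bar + Ht x sh.bar - Ht sh x.bar)) = 0 := by
      linear_combination e1 + e2 + e3
    have hA := (mul_eq_zero.mp hsum).resolve_left hDpos.ne'
    linarith
  · push_neg at hdeg
    obtain ⟨v, hv⟩ := hdeg
    have hv0 : G.degree v = 0 := Nat.le_zero.mp hv
    have hnoadj : ∀ w, ¬ G.Adj v w := by
      intro w hw
      have : 0 < G.degree v := G.degree_pos_iff_exists_adj v |>.mpr ⟨w, hw⟩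
      omega
    have hall : ∀ u : V, u = v := by
      intro u
      obtain ⟨w⟩ := hconn v u
      cases w with
      | nil => rfl
      | cons h p => exact absurd h (hnoadj _)
    have hstate : ∀ a : NAState V G, a = NAState.orig v := by
      intro a
      rcases a with u | ⟨⟨a1, b1⟩, h1⟩
      · rw [hall u]; rfl
      · rw [hall a1] at h1
        exact absurd h1 (hnoadj _)
    have hz : ∀ a b : NAState V G, Ht a b = 0 := by
      intro a b
      rw [hstate a, hstate b, hHt0]
    simp [hz]
end

section
/- In the non-atomic meeting process, the worst-case meeting time is bounded by the potential: M̃_G(x,y) ≤ Φ̃(x,y) for all states x, y, where Φ̃(x,y) = H̃(x,ȳ) + H̃(y, s̄_h) − H̃(s_h, ȳ) for a hidden state s_h. -/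
/-!
`M̃ - Φ̃` obeys a maximum principle. At a pair of states where `M̃ - Φ̃` is maximal and, among
such pairs, `Φ̃` is least, the agents have met: otherwise the first-step equations of `M̃` and
`Φ̃` in the moving coordinate make every next pair maximal too, and one of them has smaller `Φ̃`.
Where the agents have met, `M̃ = 0 ≤ Φ̃`.

`Φ̃` satisfies the first-step equation in its first coordinate directly and in its second by
symmetry, which is a cycle identity for hitting times. The walk is reversible up to `s ↦ s̄`:
the states leading to `z` are the reversals of those `z̄` leads to. Hence the Laplacian
`f ↦ d_s f(s) - ∑_{z ∈ N(s)} f(z)` is adjoint to its conjugate by the reversal. As the Laplacian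
of `H̃(·, t)` is `d - (∑ d) δ_t`, pairing it with `H̃(·̄, u)` gives
`(∑ d) (H̃(ū, t) - H̃(t̄, u)) = F(t) - F(u)` with `F(t) = ∑_s d_s H̃(s, t)`, and the three such
differences making up `Φ̃(x, y) - Φ̃(y, x)` cancel.
-/

open Finset

section FirstStep

variable {α : Type*} (N : α → Finset α)

noncomputable def firstStep (f : α → ℝ) (s : α) : ℝ :=
  1 + 1 / (#(N s) : ℝ) * ∑ z ∈ N s, f z

def laplacian (f : α → ℝ) (s : α) : ℝ := #(N s) * f s - ∑ z ∈ N s, f z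

variable {N}

lemma laplacian_eq_card_of_eq_firstStep {f : α → ℝ} {s : α} (h : f s = firstStep N f s) :
    laplacian N f s = #(N s) := by
  rcases (N s).eq_empty_or_nonempty with hs | hs
  · simp [laplacian, hs]
  · have : (#(N s) : ℝ) ≠ 0 := by exact_mod_cast hs.card_pos.ne'
    rw [laplacian, h, firstStep]
    field_simp
    ring

lemma exists_sub_eq_and_lt_firstStep {u v : α → ℝ} {s : α} {c : ℝ} (hc : 0 < c)
    (hle : ∀ z ∈ N s, u z - v z ≤ c) (heq : firstStep N u s - firstStep N v s = c) :
    ∃ z ∈ N s, u z - v z = c ∧ v z < firstStep N v s := by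
  obtain hs | hs := (N s).eq_empty_or_nonempty
  · simp [firstStep, hs] at heq
    linarith
  have hcard : (0 : ℝ) < #(N s) := by exact_mod_cast hs.card_pos
  have hsum : ∑ z ∈ N s, (u z - v z) = ∑ z ∈ N s, c := by
    rw [sum_sub_distrib, sum_const, nsmul_eq_mul, ← heq, firstStep, firstStep]
    field_simp
    ring
  have hall := (sum_eq_sum_iff_of_le hle).mp hsum
  obtain ⟨z, hz, hlt⟩ : ∃ z ∈ N s, v z < firstStep N v s := by
    refine exists_lt_of_sum_lt ?_
    rw [sum_const, nsmul_eq_mul, firstStep]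
    field_simp
    linarith
  exact ⟨z, hz, hall z hz, hlt⟩

theorem le_of_firstStep [Fintype α] {meet : α → α → Prop} {M Φ : α → α → ℝ}
    (hM0 : ∀ p q, meet p q → M p q = 0) (hΦ0 : ∀ p q, meet p q → 0 ≤ Φ p q)
    (hM : ∀ p q, ¬ meet p q →
      M p q = firstStep N (M · q) p ∨ M p q = firstStep N (M p ·) q)
    (hΦ₁ : ∀ p q, ¬ meet p q → Φ p q = firstStep N (Φ · q) p)
    (hΦ₂ : ∀ p q, ¬ meet p q → Φ p q = firstStep N (Φ p ·) q) (x y : α) :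
    M x y ≤ Φ x y := by
  classical
  set D : α × α → ℝ := fun r => M r.1 r.2 - Φ r.1 r.2
  obtain ⟨r₀, -, hr₀⟩ := univ.exists_max_image D ⟨(x, y), mem_univ _⟩
  by_contra! hxy
  have hc : 0 < D r₀ := by linarith [hr₀ (x, y) (mem_univ _)]
  obtain ⟨⟨p, q⟩, hpq, hmin⟩ := (univ.filter (D · = D r₀)).exists_min_image
    (fun r => Φ r.1 r.2) ⟨r₀, by simp⟩
  simp only [mem_filter, mem_univ, true_and] at hpq hmin
  have hmeet : ¬ meet p q := fun h => by
    have : D (p, q) ≤ 0 := by simp only [D, hM0 p q h, hΦ0 p q h, sub_nonpos]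
    linarith
  rcases hM p q hmeet with h | h
  · obtain ⟨z, -, hz, hlt⟩ := exists_sub_eq_and_lt_firstStep hc
      (fun z _ => hr₀ (z, q) (mem_univ _)) (by rw [← h, ← hΦ₁ p q hmeet]; exact hpq)
    linarith [hmin (z, q) hz, hΦ₁ p q hmeet]
  · obtain ⟨z, -, hz, hlt⟩ := exists_sub_eq_and_lt_firstStep hc
      (fun z _ => hr₀ (p, z) (mem_univ _)) (by rw [← h, ← hΦ₂ p q hmeet]; exact hpq)
    linarith [hmin (p, z) hz, hΦ₂ p q hmeet]

section Reversal

variable [Fintype α] {σ : α → α} (hσ : Function.Involutive σ)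
  (hNσ : ∀ s z, z ∈ N s ↔ σ s ∈ N (σ z))
include hσ hNσ

lemma sum_sum_mul_eq_sum_mul_sum (f g : α → ℝ) :
    ∑ s, (∑ z ∈ N s, f z) * g s = ∑ z, f z * ∑ s ∈ N (σ z), g (σ s) := by
  simp_rw [sum_mul, mul_sum]
  rw [sum_comm' (t' := univ) (s' := fun z => (N (σ z)).map ⟨σ, hσ.injective⟩)]
  · simp_rw [sum_map]
    rfl
  · intro s z
    simp [hNσ s z, hσ.eq_iff]

variable (hcard : ∀ s, #(N (σ s)) = #(N s))
include hcard

lemma sum_laplacian_mul (f g : α → ℝ) :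
    ∑ s, laplacian N f s * g s = ∑ s, f s * laplacian N (g ∘ σ) (σ s) := by
  simp only [laplacian, sub_mul, mul_sub, sum_sub_distrib, Function.comp_apply]
  rw [sum_sum_mul_eq_sum_mul_sum hσ hNσ]
  simp only [hσ _, hcard]
  congr 1
  exact sum_congr rfl fun s _ => by ring

lemma sum_laplacian (f : α → ℝ) : ∑ s, laplacian N f s = 0 := by
  have hone : laplacian N (1 : α → ℝ) = 0 := funext fun s => by simp [laplacian]
  simpa [hone] using sum_laplacian_mul hσ hNσ hcard f 1

variable {H : α → α → ℝ} (hH : ∀ s t, s ≠ t → H s t = firstStep N (H · t) s)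
include hH

lemma laplacian_hitting [DecidableEq α] (s t : α) :
    laplacian N (H · t) s = #(N s) - if s = t then ∑ s, (#(N s) : ℝ) else 0 := by
  by_cases hst : s = t
  · subst hst
    have hsum := sum_laplacian hσ hNσ hcard (H · s)
    have hrest :
        ∑ z ∈ univ.erase s, laplacian N (H · s) z = ∑ z ∈ univ.erase s, (#(N z) : ℝ) :=
      sum_congr rfl fun z hz => laplacian_eq_card_of_eq_firstStep (hH z s (ne_of_mem_erase hz))
    rw [← add_sum_erase _ _ (mem_univ s), hrest] at hsum
    rw [if_pos rfl, ← add_sum_erase _ _ (mem_univ s)]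
    linarith
  · rw [if_neg hst, sub_zero, laplacian_eq_card_of_eq_firstStep (hH s t hst)]

theorem sum_card_mul_hitting_sub_hitting (u t : α) :
    (∑ s, (#(N s) : ℝ)) * (H (σ u) t - H (σ t) u)
      = ∑ s, #(N s) * H s t - ∑ s, #(N s) * H s u := by
  classical
  have key := sum_laplacian_mul hσ hNσ hcard (H · t) (fun s => H (σ s) u)
  have hu : ((fun s => H (σ s) u) ∘ σ) = (H · u) := funext fun s => by simp [hσ s]
  simp only [hu, laplacian_hitting hσ hNσ hcard hH, hσ.eq_iff, sub_mul, mul_sub,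
    sum_sub_distrib, ite_mul, mul_ite, zero_mul, mul_zero, sum_ite_eq', mem_univ, if_true,
    hcard] at key
  have hre : ∑ s, (#(N s) : ℝ) * H (σ s) u = ∑ s, #(N s) * H s u := by
    have := Equiv.sum_comp (hσ.toPerm σ) (fun s => (#(N s) : ℝ) * H (σ s) u)
    simp only [Function.Involutive.coe_toPerm, hσ _, hcard] at this
    exact this.symm
  rw [hre] at key
  simp only [mul_comm (H _ t)] at key
  linear_combination key

end Reversal

section Potential

variable {σ : α → α} {H : α → α → ℝ}

def potential (H : α → α → ℝ) (σ : α → α) (r p q : α) : ℝ :=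
  H p (σ q) + H q (σ r) - H r (σ q)

lemma potential_nonneg_of_meet (hσ : Function.Involutive σ) {r p q : α}
    (hH0 : ∀ t, H t t = 0) (hHnn : ∀ s t, 0 ≤ H s t) (hr : ∀ z, H r (σ z) ≤ H z (σ r))
    (hpq : q = p ∨ q = σ p) : 0 ≤ potential H σ r p q := by
  rcases hpq with rfl | rfl
  · simp only [potential]
    linarith [hHnn q (σ q), hr q]
  · have := hr (σ p)
    rw [hσ p] at this
    simp only [potential, hσ p, hH0]
    linarith

lemma potential_eq_firstStep (hH : ∀ s t, s ≠ t → H s t = firstStep N (H · t) s)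
    {r p q : α} (hpq : p ≠ σ q) (hp : (N p).Nonempty) :
    potential H σ r p q = firstStep N (potential H σ r · q) p := by
  have hn : (#(N p) : ℝ) ≠ 0 := by exact_mod_cast hp.card_pos.ne'
  simp only [potential, firstStep, sum_sub_distrib, sum_add_distrib, sum_const, nsmul_eq_mul]
  rw [hH p (σ q) hpq, firstStep]
  field_simp
  ring

variable [Fintype α] (hσ : Function.Involutive σ) (hNσ : ∀ s z, z ∈ N s ↔ σ s ∈ N (σ z))
  (hcard : ∀ s, #(N (σ s)) = #(N s)) (hH : ∀ s t, s ≠ t → H s t = firstStep N (H · t) s)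
  (hmove : ∀ s t, s ≠ t → (N s).Nonempty)
include hσ hNσ hcard hH hmove

lemma potential_comm (r p q : α) : potential H σ r p q = potential H σ r q p := by
  obtain rfl | hpq := eq_or_ne p q
  · rfl
  have hpos : 0 < ∑ s, (#(N s) : ℝ) :=
    sum_pos' (fun s _ => by positivity)
      ⟨p, mem_univ p, by exact_mod_cast (hmove p q hpq).card_pos⟩
  have anti (a b : α) := sum_card_mul_hitting_sub_hitting hσ hNσ hcard hH (σ a) (σ b)
  simp only [hσ _] at anti
  apply mul_left_cancel₀ hpos.ne'
  simp only [potential]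
  linear_combination anti p q + anti q r + anti r p

lemma potential_eq_firstStep_right {r p q : α} (hqp : q ≠ σ p) :
    potential H σ r p q = firstStep N (potential H σ r p ·) q := by
  simp only [potential_comm hσ hNσ hcard hH hmove r p]
  exact potential_eq_firstStep hH hqp (hmove q (σ p) hqp)

end Potential

end FirstStep

namespace NAState

variable {V : Type*} {G : SimpleGraph V}

lemma eq_orig_or_eq_intm (s : NAState V G) : (∃ v, s = orig v) ∨ ∃ a b h, s = intm a b h := by
  rcases s with v | ⟨⟨a, b⟩, h⟩
  exacts [.inl ⟨v, rfl⟩, .inr ⟨a, b, h, rfl⟩]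

@[simp] lemma orig_inj {u v : V} : (orig u : NAState V G) = orig v ↔ u = v :=
  Sum.inl_injective.eq_iff

@[simp] lemma intm_inj {a b c d : V} {h : G.Adj a b} {h' : G.Adj c d} :
    intm a b h = intm c d h' ↔ a = c ∧ b = d :=
  Sum.inr_injective.eq_iff.trans (by simp)

@[simp] lemma orig_ne_intm {v a b : V} {h : G.Adj a b} : orig v ≠ intm a b h := Sum.inl_ne_inr

@[simp] lemma intm_ne_orig {v a b : V} {h : G.Adj a b} : intm a b h ≠ orig v := Sum.inr_ne_inl

@[simp] lemma bar_orig (v : V) : bar (orig v : NAState V G) = orig v := rfl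

@[simp] lemma bar_intm {a b : V} (h : G.Adj a b) : bar (intm a b h) = intm b a h.symm := rfl

lemma bar_involutive : Function.Involutive (bar : NAState V G → NAState V G) := by
  rintro (v | ⟨⟨a, b⟩, h⟩) <;> rfl

variable [Fintype V] [DecidableRel G.Adj]

instance : Fintype (NAState V G) := inferInstanceAs (Fintype (V ⊕ _))

def nbrs : NAState V G → Finset (NAState V G)
  | Sum.inl v => (G.neighborFinset v).attach.map
      ⟨fun w => intm v w.1 ((G.mem_neighborFinset _ _).mp w.2),
        fun _ _ h => Subtype.ext (intm_inj.mp h).2⟩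
  | Sum.inr ⟨(_, b), _⟩ => {orig b}

@[simp] lemma mem_nbrs_orig {v : V} {z : NAState V G} :
    z ∈ nbrs (orig v) ↔ ∃ w h, z = intm v w h := by
  change z ∈ (G.neighborFinset v).attach.map _ ↔ _
  simp only [mem_map, mem_attach, true_and, Subtype.exists, eq_comm]
  exact ⟨fun ⟨w, hw, hz⟩ => ⟨w, (G.mem_neighborFinset _ _).mp hw, hz⟩,
    fun ⟨w, h, hz⟩ => ⟨w, (G.mem_neighborFinset _ _).mpr h, hz⟩⟩

@[simp] lemma nbrs_intm {a b : V} (h : G.Adj a b) : nbrs (intm a b h) = {orig b} := rfl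

lemma mem_nbrs_iff_bar_mem (s z : NAState V G) : z ∈ nbrs s ↔ s.bar ∈ nbrs z.bar := by
  obtain ⟨v, rfl⟩ | ⟨a, b, h, rfl⟩ := s.eq_orig_or_eq_intm <;>
  obtain ⟨u, rfl⟩ | ⟨c, d, h', rfl⟩ := z.eq_orig_or_eq_intm <;>
  simp only [mem_nbrs_orig, nbrs_intm, mem_singleton, bar_orig, bar_intm, orig_inj, intm_inj,
    orig_ne_intm, intm_ne_orig, exists_false]
  all_goals grind [SimpleGraph.Adj.symm]

lemma card_nbrs_bar (s : NAState V G) : #(nbrs s.bar) = #(nbrs s) := by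
  obtain ⟨v, rfl⟩ | ⟨a, b, h, rfl⟩ := s.eq_orig_or_eq_intm <;> simp

lemma nbrs_nonempty (hconn : G.Connected) {s t : NAState V G} (hst : s ≠ t) :
    (nbrs s).Nonempty := by
  obtain ⟨v, rfl⟩ | ⟨a, b, h, rfl⟩ := s.eq_orig_or_eq_intm
  · have : Nontrivial V := by
      obtain ⟨u, rfl⟩ | ⟨a, b, h, rfl⟩ := t.eq_orig_or_eq_intm
      exacts [⟨v, u, by simpa using hst⟩, h.nontrivial]
    obtain ⟨w, hw⟩ := hconn.preconnected.exists_adj_of_nontrivial v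
    exact ⟨intm v w hw, mem_nbrs_orig.mpr ⟨w, hw, rfl⟩⟩
  · simp

lemma asSum_eq_sum_nbrs (f : NAState V G → ℝ) (s : NAState V G) :
    asSum f s = ∑ z ∈ nbrs s, f z := by
  obtain ⟨v, rfl⟩ | ⟨a, b, h, rfl⟩ := s.eq_orig_or_eq_intm
  · rw [orig, nbrs, sum_map]
    rfl
  · exact (sum_singleton _ _).symm

lemma asDeg_eq_card_nbrs (s : NAState V G) : asDeg s = #(nbrs s) := by
  obtain ⟨v, rfl⟩ | ⟨a, b, h, rfl⟩ := s.eq_orig_or_eq_intm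
  · simp [orig, asDeg, nbrs]
  · rw [nbrs_intm, card_singleton, Nat.cast_one]
    rfl

lemma firstStep_nbrs (f : NAState V G → ℝ) (s : NAState V G) :
    firstStep nbrs f s = 1 + 1 / asDeg s * asSum f s := by
  rw [firstStep, asDeg_eq_card_nbrs, asSum_eq_sum_nbrs]

lemma firstStep_nbrs_intm (f : NAState V G → ℝ) {a b : V} (h : G.Adj a b) :
    firstStep nbrs f (intm a b h) = 1 + f (orig b) := by
  simp [firstStep]

end NAState

theorem stmt18_general {V : Type*} [Fintype V] (G : SimpleGraph V)
    [DecidableRel G.Adj] (hconn : G.Connected)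
    (Ht : NAState V G → NAState V G → ℝ)
    (hHt0 : ∀ s, Ht s s = 0)
    (hHtorig : ∀ (v : V) (s : NAState V G), NAState.orig v ≠ s →
      Ht (NAState.orig v) s =
        1 + (1 / (G.degree v : ℝ)) * NAState.asSum (fun z => Ht z s) (NAState.orig v))
    (hHtintm : ∀ (a b : V) (h : G.Adj a b) (s : NAState V G), NAState.intm a b h ≠ s →
      Ht (NAState.intm a b h) s = 1 + Ht (NAState.orig b) s)
    (hHtnn : ∀ s s' : NAState V G, 0 ≤ Ht s s')
    (sh : NAState V G) (hhidden : ∀ z : NAState V G, Ht sh z.bar ≤ Ht z sh.bar)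
    (M : NAState V G → NAState V G → ℝ)
    (hMmeet : ∀ s s' : NAState V G, s' = s ∨ s' = s.bar → M s s' = 0)
    (hMavg : ∀ s₁ s₂ : NAState V G, ¬ (s₂ = s₁ ∨ s₂ = s₁.bar) →
      M s₁ s₂ = 1 + (1 / NAState.asDeg s₁) * NAState.asSum (fun z => M z s₂) s₁ ∨
      M s₁ s₂ = 1 + (1 / NAState.asDeg s₂) * NAState.asSum (fun z => M s₁ z) s₂)
    (x y : NAState V G) :
    M x y ≤ Ht x y.bar + Ht y sh.bar - Ht sh y.bar := by
  have hstep : ∀ s t, s ≠ t → Ht s t = firstStep NAState.nbrs (Ht · t) s := by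
    intro s t hst
    obtain ⟨v, rfl⟩ | ⟨a, b, h, rfl⟩ := s.eq_orig_or_eq_intm
    · rw [NAState.firstStep_nbrs]
      exact hHtorig v t hst
    · rw [NAState.firstStep_nbrs_intm]
      exact hHtintm a b h t hst
  have hmove : ∀ s t : NAState V G, s ≠ t → (NAState.nbrs s).Nonempty :=
    fun _ _ => NAState.nbrs_nonempty hconn
  have hbar := NAState.bar_involutive (G := G)
  have hleft {p q : NAState V G} (hpq : ¬(q = p ∨ q = p.bar)) : p ≠ q.bar :=
    fun h => hpq (.inr (hbar.eq_iff.mp h.symm))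
  refine le_of_firstStep (N := NAState.nbrs) (Φ := potential Ht NAState.bar sh) hMmeet
    (fun p q => potential_nonneg_of_meet hbar hHt0 hHtnn hhidden)
    (fun p q hpq => by simpa only [NAState.firstStep_nbrs] using hMavg p q hpq)
    (fun p q hpq => potential_eq_firstStep hstep (hleft hpq) (hmove _ _ (hleft hpq)))
    (fun p q hpq => potential_eq_firstStep_right hbar NAState.mem_nbrs_iff_bar_mem
      NAState.card_nbrs_bar hstep hmove (fun h => hpq (.inr h))) x y

theorem stmt18 {V : Type*} [Fintype V] [DecidableEq V] (G : SimpleGraph V)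
    [DecidableRel G.Adj] (hconn : G.Connected)
    (Ht : NAState V G → NAState V G → ℝ)
    (hHt0 : ∀ s, Ht s s = 0)
    (hHtorig : ∀ (v : V) (s : NAState V G), NAState.orig v ≠ s →
      Ht (NAState.orig v) s =
        1 + (1 / (G.degree v : ℝ)) * NAState.asSum (fun z => Ht z s) (NAState.orig v))
    (hHtintm : ∀ (a b : V) (h : G.Adj a b) (s : NAState V G), NAState.intm a b h ≠ s →
      Ht (NAState.intm a b h) s = 1 + Ht (NAState.orig b) s)
    (hHtnn : ∀ s s' : NAState V G, 0 ≤ Ht s s')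
    (sh : NAState V G) (hhidden : ∀ z : NAState V G, Ht sh z.bar ≤ Ht z sh.bar)
    (M : NAState V G → NAState V G → ℝ)
    (hMmeet : ∀ s s' : NAState V G, s' = s ∨ s' = s.bar → M s s' = 0)
    (hMsymm : ∀ s s' : NAState V G, M s s' = M s' s)
    (hMavg : ∀ s₁ s₂ : NAState V G, ¬ (s₂ = s₁ ∨ s₂ = s₁.bar) →
      M s₁ s₂ = 1 + (1 / NAState.asDeg s₁) * NAState.asSum (fun z => M z s₂) s₁ ∨
      M s₁ s₂ = 1 + (1 / NAState.asDeg s₂) * NAState.asSum (fun z => M s₁ z) s₂)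
    (x y : NAState V G) :
    M x y ≤ Ht x y.bar + Ht y sh.bar - Ht sh y.bar :=
  stmt18_general G hconn Ht hHt0 hHtorig hHtintm hHtnn sh hhidden M hMmeet hMavg x y
end
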